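/- arXiv:1104.2844 — 4 statements merged into one kernel-verified Lean document; each statement's English description precedes it below -/
import Mathlib

section
/- Any concept C built only from concept names, conjunction, existential restriction, universal restriction, and implications A → D with A a concept name, is preserved under binary products: if d₁ ∈ C^{I₁} and d₂ ∈ C^{I₂}, then (d₁,d₂) ∈ C^{I₁ × I₂}. -/
structure Interp (A R : Type) where
  Dom : Type
  atom : A → Dom → Prop
  rel : R → Dom → Dom → Prop

/-- Concepts built from concept names, conjunction, existential restriction,
universal restriction, and implications `A → D` with `A` a concept name. -/
inductive PC (A R : Type) where
  | atom : A → PC A R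
  | conj : PC A R → PC A R → PC A R
  | ex : R → PC A R → PC A R
  | all : R → PC A R → PC A R
  | imp : A → PC A R → PC A R

def PC.sat {A R : Type} (I : Interp A R) : PC A R → I.Dom → Prop
  | PC.atom a, d => I.atom a d
  | PC.conj C D, d => PC.sat I C d ∧ PC.sat I D d
  | PC.ex r C, d => ∃ e, I.rel r d e ∧ PC.sat I C e
  | PC.all r C, d => ∀ e, I.rel r d e → PC.sat I C e
  | PC.imp a C, d => I.atom a d → PC.sat I C d

def Prod2 {A R : Type} (I₁ I₂ : Interp A R) : Interp A R where
  Dom := I₁.Dom × I₂.Dom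
  atom a d := I₁.atom a d.1 ∧ I₂.atom a d.2
  rel r d e := I₁.rel r d.1 e.1 ∧ I₂.rel r d.2 e.2

theorem PC_preserved_under_binary_products {A R : Type} (C : PC A R)
    (I₁ I₂ : Interp A R) (d₁ : I₁.Dom) (d₂ : I₂.Dom)
    (h₁ : PC.sat I₁ C d₁) (h₂ : PC.sat I₂ C d₂) :
    PC.sat (Prod2 I₁ I₂) C (d₁, d₂) := by
  induction C generalizing d₁ d₂ with
  | atom a => exact ⟨h₁, h₂⟩
  | conj C D ihC ihD => exact ⟨ihC _ _ h₁.1 h₂.1, ihD _ _ h₁.2 h₂.2⟩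
  | ex r C ih =>
    obtain ⟨e₁, hr₁, hs₁⟩ := h₁
    obtain ⟨e₂, hr₂, hs₂⟩ := h₂
    exact ⟨(e₁, e₂), ⟨hr₁, hr₂⟩, ih _ _ hs₁ hs₂⟩
  | all r C ih =>
    rintro ⟨e₁, e₂⟩ ⟨hr₁, hr₂⟩
    exact ih _ _ (h₁ _ hr₁) (h₂ _ hr₂)
  | imp a C ih =>
    -- The antecedent is a concept name, and a name holds at a pair only if it holds at both components.
    rintro ⟨ha₁, ha₂⟩
    exact ih _ _ (h₁ ha₁) (h₂ ha₂)
end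

section
/- An ALC concept C is preserved under binary products if and only if the concept ∃s.C is preserved under binary products (for a role s not occurring in C). -/
inductive ALC (A R : Type) where
  | atom : A → ALC A R
  | neg : ALC A R → ALC A R
  | conj : ALC A R → ALC A R → ALC A R
  | ex : R → ALC A R → ALC A R

def ALC.sat {A R : Type} (I : Interp A R) : ALC A R → I.Dom → Prop
  | ALC.atom a, d => I.atom a d
  | ALC.neg C, d => ¬ ALC.sat I C d
  | ALC.conj C D, d => ALC.sat I C d ∧ ALC.sat I D d
  | ALC.ex r C, d => ∃ e, I.rel r d e ∧ ALC.sat I C e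

/-- The set of role names occurring in a concept. -/
def ALC.roles {A R : Type} : ALC A R → Set R
  | ALC.atom _ => ∅
  | ALC.neg C => C.roles
  | ALC.conj C D => C.roles ∪ D.roles
  | ALC.ex r C => insert r C.roles

/-- `C` is preserved under binary products. -/
def PreservedProd {A R : Type} (C : ALC A R) : Prop :=
  ∀ (I₁ I₂ : Interp A R) (d₁ : I₁.Dom) (d₂ : I₂.Dom),
    ALC.sat I₁ C d₁ → ALC.sat I₂ C d₂ → ALC.sat (Prod2 I₁ I₂) C (d₁, d₂)

/-!
Forward: a pair of `s`-successors is an `s`-successor of the pair. Backward: given `d₁ ⊨ C` and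
`d₂ ⊨ C`, reinterpret `s` in each model as the single loop `dᵢ → dᵢ`. As `s` does not occur in
`C`, this changes neither `dᵢ ⊨ C` nor the extension of `C` in the product, and now `dᵢ ⊨ ∃s.C`;
so `(d₁, d₂) ⊨ ∃s.C` in the product of the modified models, where `(d₁, d₂)` is its own only
`s`-successor.
-/

namespace ALC

variable {A R : Type}

theorem sat_congr_rel (I : Interp A R) (rel : R → I.Dom → I.Dom → Prop) (C : ALC A R)
    (h : ∀ r ∈ C.roles, rel r = I.rel r) (d : I.Dom) :
    sat { I with rel := rel } C d ↔ sat I C d := by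
  induction C generalizing d with
  | atom a => rfl
  | neg C ih => exact not_congr (ih h d)
  | conj C D ihC ihD =>
    exact and_congr (ihC (fun r hr => h r (Or.inl hr)) d) (ihD (fun r hr => h r (Or.inr hr)) d)
  | ex r C ih =>
    simp only [sat, h r (Set.mem_insert r _)]
    exact exists_congr fun e =>
      and_congr_right' (ih (fun q hq => h q (Set.mem_insert_of_mem r hq)) e)

end ALC

namespace Interp

variable {A R : Type} [DecidableEq R]

def update (I : Interp A R) (s : R) (p : I.Dom → I.Dom → Prop) : Interp A R :=
  { I with rel := Function.update I.rel s p }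

theorem sat_update_of_notMem_roles (I : Interp A R) {s : R} (p : I.Dom → I.Dom → Prop)
    {C : ALC A R} (hs : s ∉ C.roles) (d : I.Dom) :
    ALC.sat (I.update s p) C d ↔ ALC.sat I C d :=
  ALC.sat_congr_rel I _ C
    (fun _ hr => Function.update_of_ne (ne_of_mem_of_not_mem hr hs) p I.rel) d

theorem sat_prod2_update_of_notMem_roles (I₁ I₂ : Interp A R) {s : R}
    (p₁ : I₁.Dom → I₁.Dom → Prop) (p₂ : I₂.Dom → I₂.Dom → Prop) {C : ALC A R}
    (hs : s ∉ C.roles) (d : I₁.Dom × I₂.Dom) :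
    ALC.sat (Prod2 (I₁.update s p₁) (I₂.update s p₂)) C d ↔ ALC.sat (Prod2 I₁ I₂) C d :=
  ALC.sat_congr_rel (Prod2 I₁ I₂) _ C (fun r hr => by
    simp only [update, Prod2, Function.update_of_ne (ne_of_mem_of_not_mem hr hs)]) d

end Interp

namespace PreservedProd

variable {A R : Type} {C : ALC A R}

theorem ex (hC : PreservedProd C) (s : R) : PreservedProd (ALC.ex s C) := by
  rintro I₁ I₂ d₁ d₂ ⟨e₁, hd₁, he₁⟩ ⟨e₂, hd₂, he₂⟩
  exact ⟨(e₁, e₂), ⟨hd₁, hd₂⟩, hC I₁ I₂ e₁ e₂ he₁ he₂⟩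

theorem of_ex {s : R} (hs : s ∉ C.roles) (h : PreservedProd (ALC.ex s C)) :
    PreservedProd C := by
  classical
  intro I₁ I₂ d₁ d₂ h₁ h₂
  have loop {I : Interp A R} {d : I.Dom} (hd : ALC.sat I C d) :
      ALC.sat (I.update s fun _ e => e = d) (ALC.ex s C) d :=
    ⟨d, by simp [Interp.update], (Interp.sat_update_of_notMem_roles I _ hs d).2 hd⟩
  obtain ⟨⟨e₁, e₂⟩, ⟨he₁, he₂⟩, he⟩ :=
    h (I₁.update s fun _ e => e = d₁) (I₂.update s fun _ e => e = d₂) d₁ d₂ (loop h₁) (loop h₂)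
  simp only [Interp.update, Function.update_self] at he₁ he₂
  have hprod := (Interp.sat_prod2_update_of_notMem_roles I₁ I₂ _ _ hs _).1 he
  rwa [he₁, he₂] at hprod

end PreservedProd

theorem preservedProd_iff_ex {A R : Type} (C : ALC A R) (s : R)
    (hs : s ∉ C.roles) :
    PreservedProd C ↔ PreservedProd (ALC.ex s C) :=
  ⟨fun h => h.ex s, PreservedProd.of_ex hs⟩
end

section
/- Unraveling preserves ALC concept satisfaction: for a model I with designated element d̂, define the tree model I' whose domain is the set of paths d₀r₀d₁⋯r_{k-1}d_k with d₀ = d̂ and (d_i, d_{i+1}) ∈ r_i^I, with a path satisfying atom A iff its last element does, and edges extending paths by one step. Then for every ALC concept C and every path p with last element e, we have e ∈ C^I ↔ p ∈ C^{I'}. -/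
/-- `isPath I d l` : the list `l` of (role, element) steps forms a path in `I`
starting at `d`, i.e. consecutive elements are connected by the indicated roles. -/
def isPath {A R : Type} (I : Interp A R) : I.Dom → List (R × I.Dom) → Prop
  | _, [] => True
  | d, (r, e) :: rest => I.rel r d e ∧ isPath I e rest

/-- The last element of the path starting at `d` with steps `l`. -/
def lastOf {A R : Type} (I : Interp A R) : I.Dom → List (R × I.Dom) → I.Dom
  | d, [] => d
  | _, (_, e) :: rest => lastOf I e rest

/-- The unraveling of `I` at `d0`: the tree interpretation whose domain is the
set of paths starting at `d0`, atoms determined by last elements, and edges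
extending a path by one step. -/
def Unravel {A R : Type} (I : Interp A R) (d0 : I.Dom) : Interp A R where
  Dom := { l : List (R × I.Dom) // isPath I d0 l }
  atom a p := I.atom a (lastOf I d0 p.1)
  rel r p q := ∃ e, q.1 = p.1 ++ [(r, e)]

/-! Sending a path to its last element is a bounded morphism (a functional bisimulation)
from the unraveling onto `I`, and satisfaction of ALC concepts is invariant under bounded
morphisms. -/

structure Interp.IsBoundedMorphism {A R : Type} {I J : Interp A R} (f : I.Dom → J.Dom) :
    Prop where
  atom_iff : ∀ a d, J.atom a (f d) ↔ I.atom a d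
  rel_map : ∀ {r d d'}, I.rel r d d' → J.rel r (f d) (f d')
  exists_rel_of_rel : ∀ {r d e}, J.rel r (f d) e → ∃ d', I.rel r d d' ∧ f d' = e

theorem Interp.IsBoundedMorphism.sat_iff {A R : Type} {I J : Interp A R} {f : I.Dom → J.Dom}
    (hf : Interp.IsBoundedMorphism f) (C : ALC A R) (d : I.Dom) :
    ALC.sat J C (f d) ↔ ALC.sat I C d := by
  induction C generalizing d with
  | atom a => exact hf.atom_iff a d
  | neg C ih => exact not_congr (ih d)
  | conj C D ihC ihD => exact and_congr (ihC d) (ihD d)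
  | ex r C ih =>
    constructor
    · rintro ⟨e, hde, he⟩
      obtain ⟨d', hdd', rfl⟩ := hf.exists_rel_of_rel hde
      exact ⟨d', hdd', (ih d').mp he⟩
    · rintro ⟨d', hdd', hd'⟩
      exact ⟨f d', hf.rel_map hdd', (ih d').mpr hd'⟩

section Paths

variable {A R : Type} (I : Interp A R)

@[simp]
theorem lastOf_append_singleton (d : I.Dom) (l : List (R × I.Dom)) (r : R) (e : I.Dom) :
    lastOf I d (l ++ [(r, e)]) = e := by
  induction l generalizing d with
  | nil => rfl
  | cons x l ih => exact ih x.2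

theorem isPath_append_singleton (d : I.Dom) (l : List (R × I.Dom)) (r : R) (e : I.Dom) :
    isPath I d (l ++ [(r, e)]) ↔ isPath I d l ∧ I.rel r (lastOf I d l) e := by
  induction l generalizing d with
  | nil => simp [isPath, lastOf]
  | cons x l ih => simp [isPath, lastOf, ih x.2, and_assoc]

theorem isBoundedMorphism_lastOf_unravel (d0 : I.Dom) :
    Interp.IsBoundedMorphism (J := I) (fun p : (Unravel I d0).Dom => lastOf I d0 p.1) where
  atom_iff _ _ := Iff.rfl
  rel_map := by
    rintro r p ⟨q, hq⟩ ⟨e, rfl⟩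
    simp only [lastOf_append_singleton]
    exact ((isPath_append_singleton I d0 p.1 r e).mp hq).2
  exists_rel_of_rel {r p e} hpe :=
    ⟨⟨p.1 ++ [(r, e)], (isPath_append_singleton I d0 p.1 r e).mpr ⟨p.2, hpe⟩⟩, ⟨e, rfl⟩,
      lastOf_append_singleton I d0 p.1 r e⟩

end Paths

theorem unraveling_preserves_ALC {A R : Type} (I : Interp A R) (d0 : I.Dom)
    (C : ALC A R) (p : (Unravel I d0).Dom) :
    ALC.sat I C (lastOf I d0 p.1) ↔ ALC.sat (Unravel I d0) C p :=
  (isBoundedMorphism_lastOf_unravel I d0).sat_iff C p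
end

section
/- Unraveling commutes with products relative to ALC satisfaction: with I₁, I₂ models, d̂₁ ∈ Δ^{I₁}, d̂₂ ∈ Δ^{I₂}, and I'₁, I'₂ their unravelings at d̂₁, d̂₂, for every ALC concept C and all paths p₁ (ending in e₁) and p₂ (ending in e₂), we have (e₁,e₂) ∈ C^{I₁ × I₂} if and only if (p₁,p₂) ∈ C^{I'₁ × I'₂}. -/
/-!
The map sending a path to its last element is a bounded morphism (p-morphism) from the
unraveling onto the model: a step in the unraveling appends an edge of the model, and every edge
leaving the last element extends the path. Bounded morphisms preserve ALC satisfaction and are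
closed under componentwise products, which is all the induction on concepts needs.
-/

namespace Interp

variable {A R : Type}

structure IsBoundedMorphism_s12 (I J : Interp A R) (f : I.Dom → J.Dom) : Prop where
  atom_iff : ∀ a d, J.atom a (f d) ↔ I.atom a d
  map_rel : ∀ r d e, I.rel r d e → J.rel r (f d) (f e)
  exists_rel_of_rel : ∀ r d e', J.rel r (f d) e' → ∃ e, I.rel r d e ∧ f e = e'

namespace IsBoundedMorphism_s12

variable {I J : Interp A R} {f : I.Dom → J.Dom}

theorem sat_iff_s12 (hf : IsBoundedMorphism_s12 I J f) (C : ALC A R) (d : I.Dom) :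
    ALC.sat J C (f d) ↔ ALC.sat I C d := by
  induction C generalizing d with
  | atom a => exact hf.atom_iff a d
  | neg C ih => exact not_congr (ih d)
  | conj C D ihC ihD => exact and_congr (ihC d) (ihD d)
  | ex r C ih =>
    constructor
    · rintro ⟨e', hrel, hsat⟩
      obtain ⟨e, hde, rfl⟩ := hf.exists_rel_of_rel r d e' hrel
      exact ⟨e, hde, (ih e).1 hsat⟩
    · rintro ⟨e, hde, hsat⟩
      exact ⟨f e, hf.map_rel r d e hde, (ih e).2 hsat⟩

theorem prodMap {I₁ J₁ I₂ J₂ : Interp A R} {f₁ : I₁.Dom → J₁.Dom} {f₂ : I₂.Dom → J₂.Dom}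
    (hf₁ : IsBoundedMorphism_s12 I₁ J₁ f₁) (hf₂ : IsBoundedMorphism_s12 I₂ J₂ f₂) :
    IsBoundedMorphism_s12 (Prod2 I₁ I₂) (Prod2 J₁ J₂) (Prod.map f₁ f₂) where
  atom_iff a d := and_congr (hf₁.atom_iff a d.1) (hf₂.atom_iff a d.2)
  map_rel r d e h := ⟨hf₁.map_rel r d.1 e.1 h.1, hf₂.map_rel r d.2 e.2 h.2⟩
  exists_rel_of_rel r d e' h := by
    obtain ⟨e₁, h₁, he₁⟩ := hf₁.exists_rel_of_rel r d.1 e'.1 h.1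
    obtain ⟨e₂, h₂, he₂⟩ := hf₂.exists_rel_of_rel r d.2 e'.2 h.2
    exact ⟨(e₁, e₂), ⟨h₁, h₂⟩, Prod.ext he₁ he₂⟩

end IsBoundedMorphism_s12

end Interp

section Paths

variable {A R : Type} (I : Interp A R)

theorem Unravel.isBoundedMorphism_lastOf (d0 : I.Dom) :
    Interp.IsBoundedMorphism_s12 (Unravel I d0) I (fun p => lastOf I d0 p.1) where
  atom_iff _ _ := Iff.rfl
  map_rel r p q := by
    rintro ⟨e, hq⟩
    have hpath := q.2
    rw [hq, isPath_append_singleton] at hpath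
    simpa only [hq, lastOf_append_singleton] using hpath.2
  exists_rel_of_rel r p e h :=
    ⟨⟨p.1 ++ [(r, e)], (isPath_append_singleton I d0 p.1 r e).2 ⟨p.2, h⟩⟩, ⟨e, rfl⟩,
      lastOf_append_singleton I d0 p.1 r e⟩

end Paths

theorem unraveling_commutes_with_products {A R : Type}
    (I₁ I₂ : Interp A R) (d0₁ : I₁.Dom) (d0₂ : I₂.Dom) (C : ALC A R)
    (p₁ : (Unravel I₁ d0₁).Dom) (p₂ : (Unravel I₂ d0₂).Dom) :
    ALC.sat (Prod2 I₁ I₂) C (lastOf I₁ d0₁ p₁.1, lastOf I₂ d0₂ p₂.1) ↔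
    ALC.sat (Prod2 (Unravel I₁ d0₁) (Unravel I₂ d0₂)) C (p₁, p₂) :=
  ((Unravel.isBoundedMorphism_lastOf I₁ d0₁).prodMap
    (Unravel.isBoundedMorphism_lastOf I₂ d0₂)).sat_iff_s12 C (p₁, p₂)
end
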